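/- arXiv:1412.5817 — 3 statements merged into one kernel-verified Lean document; each statement's English description precedes it below -/
import Mathlib

section
/- Let d = 3, Ω a rank-2 skew-symmetric matrix with Ω² = −ω² P where P is the orthogonal projection onto the plane E' orthogonal to ker Ω, and ω ≠ 0. Let C = {q ∈ Y : ⟨Pq, q⟩_M = c} with c = ⟨P q̄, q̄⟩_M > 0. Suppose U is homogeneous of degree −α < 0. Then q̄ ∈ Y is a relative equilibrium configuration (for some angular speed) if and only if q̄ is a critical point of U restricted to C and U(q̄) > 0. -/
open scoped BigOperators Matrix
noncomputable section

/-- A single body position in `ℝ^d`. -/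
abbrev Body (d : ℕ) := Fin d → ℝ

/-- A configuration of `n` bodies in `ℝ^d`. -/
abbrev Conf (d n : ℕ) := Fin n → Body d

/-- Euclidean dot product on `ℝ^d`. -/
def dotp {d : ℕ} (v w : Body d) : ℝ := ∑ i, v i * w i

/-- The collision set `Δ`. -/
def collision {d n : ℕ} : Set (Conf d n) := {q | ∃ i j : Fin n, i ≠ j ∧ q i = q j}

/-- The mass metric `⟨v,w⟩_M = ∑ j m_j (v_j ⬝ w_j)`. -/
def mInner {d n : ℕ} (m : Fin n → ℝ) (v w : Conf d n) : ℝ := ∑ j, m j * dotp (v j) (w j)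

/-- The diagonal action of a `d × d` matrix on a configuration. -/
def matAct {d n : ℕ} (g : Matrix (Fin d) (Fin d) ℝ) (q : Conf d n) : Conf d n :=
  fun j => g.mulVec (q j)

/- ### Auxiliary lemmas -/

lemma dotp_eq_dotProduct {d : ℕ} (v w : Body d) : dotp v w = dotProduct v w := rfl

lemma mInner_comm' {d n : ℕ} (m : Fin n → ℝ) (x y : Conf d n) : mInner m x y = mInner m y x := by
  simp [mInner, dotp, mul_comm]

lemma mInner_smul_left' {d n : ℕ} (m : Fin n → ℝ) (c : ℝ) (x y : Conf d n) :
    mInner m (c • x) y = c * mInner m x y := by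
  simp [mInner, dotp, Finset.mul_sum, Finset.sum_mul]
  exact Finset.sum_congr rfl fun j _ => Finset.sum_congr rfl fun i _ => by ring

lemma mInner_sub_left' {d n : ℕ} (m : Fin n → ℝ) (x y z : Conf d n) :
    mInner m (x - y) z = mInner m x z - mInner m y z := by
  simp [mInner, dotp, sub_mul, mul_sub, Finset.sum_sub_distrib]

lemma dotp_self_eq_zero' {d : ℕ} (v : Body d) (h : dotp v v = 0) : v = 0 := by
  funext i
  have h3 := (Finset.sum_eq_zero_iff_of_nonneg (fun i _ => mul_self_nonneg (v i))).mp h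
  simpa [mul_self_eq_zero] using h3 i (Finset.mem_univ i)

lemma mInner_self_eq_zero' {d n : ℕ} (m : Fin n → ℝ) (hm : ∀ j, 0 < m j) (x : Conf d n)
    (h : mInner m x x = 0) : x = 0 := by
  have h1 : ∀ j ∈ Finset.univ, m j * dotp (x j) (x j) = 0 :=
    (Finset.sum_eq_zero_iff_of_nonneg
      (fun j _ => mul_nonneg (hm j).le (Finset.sum_nonneg fun i _ => mul_self_nonneg _))).mp h
  funext j
  have h2 : dotp (x j) (x j) = 0 := by
    rcases mul_eq_zero.mp (h1 j (Finset.mem_univ j)) with h'|h'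
    · exact absurd h' (hm j).ne'
    · exact h'
  exact dotp_self_eq_zero' (x j) h2

lemma mInner_const' {d n : ℕ} (m : Fin n → ℝ) (x : Conf d n) (a : Body d) :
    mInner m x (fun _ => a) = dotp (∑ j, m j • x j) a := by
  simp [mInner, dotp, Finset.sum_apply, Finset.mul_sum, Finset.sum_mul]
  rw [Finset.sum_comm]
  exact Finset.sum_congr rfl fun j _ => Finset.sum_congr rfl fun i _ => by ring

lemma mInner_matAct_symm' {d n : ℕ} (m : Fin n → ℝ) (P : Matrix (Fin d) (Fin d) ℝ)
    (hP : Pᵀ = P) (x y : Conf d n) : mInner m (matAct P x) y = mInner m x (matAct P y) := by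
  unfold mInner matAct
  refine Finset.sum_congr rfl fun j _ => ?_
  rw [dotp_eq_dotProduct, dotp_eq_dotProduct, dotProduct_comm,
    Matrix.dotProduct_mulVec, ← Matrix.mulVec_transpose, hP, dotProduct_comm]

lemma matAct_matAct' {d n : ℕ} (A B : Matrix (Fin d) (Fin d) ℝ) (q : Conf d n) :
    matAct A (matAct B q) = matAct (A * B) q := by
  funext j; exact (Matrix.mulVec_mulVec (q j) A B)

lemma sum_smul_matAct' {d n : ℕ} (m : Fin n → ℝ) (P : Matrix (Fin d) (Fin d) ℝ)
    (q : Conf d n) (hq : ∑ j, m j • q j = 0) : ∑ j, m j • (matAct P q) j = 0 :=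
  calc ∑ j, m j • (matAct P q) j = ∑ j, Matrix.mulVecLin P (m j • q j) := by
        refine Finset.sum_congr rfl fun j _ => ?_
        rw [LinearMap.map_smul]; rfl
    _ = Matrix.mulVecLin P (∑ j, m j • q j) := (map_sum _ _ _).symm
    _ = 0 := by rw [hq]; simp

lemma collision_closed' {d n : ℕ} : IsClosed (collision : Set (Conf d n)) := by
  have : (collision : Set (Conf d n)) =
      ⋃ (i : Fin n), ⋃ (j : Fin n), ⋃ (_ : i ≠ j), {q : Conf d n | q i = q j} := by
    ext q; simp [collision]
  rw [this]
  refine isClosed_iUnion_of_finite fun i => isClosed_iUnion_of_finite fun j =>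
    isClosed_iUnion_of_finite fun _ => ?_
  exact isClosed_eq (continuous_apply i) (continuous_apply j)

/-- (`d = 3`) Let `Ω` be a rank-2 skew-symmetric matrix with `Ω² = -ω² P`,
`ω ≠ 0`, where `P` is the orthogonal projection onto the plane orthogonal to `ker Ω`,
and let `C = {q ∈ Y : ⟨Pq, q⟩_M = c}` be the vertical cylinder through `q̄`, with
`c = ⟨P q̄, q̄⟩_M > 0`.  If `U` is homogeneous of degree `-α < 0` (and translation
invariant), then `q̄ ∈ Y` is a relative equilibrium configuration for some angular speed
(`∇_M U(q̄) = -w² P q̄`, `w ≠ 0`) iff `q̄` is a critical point of `U` restricted to `C`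
and `U(q̄) > 0`. -/
theorem relative_equilibrium_iff_critical_on_cylinder {n : ℕ}
    (m : Fin n → ℝ) (hm : ∀ j, 0 < m j) (α : ℝ) (hα : 0 < α)
    (U : Conf 3 n → ℝ) (hU : ContDiffOn ℝ (⊤ : ℕ∞) U (collisionᶜ))
    (hhom : ∀ c : ℝ, 0 < c → ∀ q : Conf 3 n, q ∉ (collision : Set (Conf 3 n)) →
      U (c • q) = c ^ (-α) * U q)
    (htr : ∀ (a : Body 3) (q : Conf 3 n), U (fun j => q j + a) = U q)
    (Ω P : Matrix (Fin 3) (Fin 3) ℝ)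
    (hskew : Ωᵀ = -Ω) (hrank : Ω.rank = 2)
    (hPsym : Pᵀ = P) (hPidem : P * P = P)
    (ω : ℝ) (hω : ω ≠ 0) (hΩP : Ω * Ω = (-(ω ^ 2)) • P)
    (q : Conf 3 n) (hq : q ∉ (collision : Set (Conf 3 n)))
    (hqY : ∑ j, m j • q j = 0)
    (hc : 0 < mInner m (matAct P q) q)
    (G : Conf 3 n) (hG : ∀ v : Conf 3 n, fderiv ℝ U q v = mInner m G v) :
    (∃ w : ℝ, w ≠ 0 ∧ G = (-(w ^ 2)) • matAct P q) ↔
      ((∀ v : Conf 3 n, (∑ j, m j • v j = 0) → mInner m (matAct P q) v = 0 →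
          fderiv ℝ U q v = 0) ∧ 0 < U q) := by
  have hopen : IsOpen (collisionᶜ : Set (Conf 3 n)) := collision_closed'.isOpen_compl
  have hF : HasFDerivAt U (fderiv ℝ U q) q :=
    ((hU.contDiffAt (hopen.mem_nhds hq)).differentiableAt (by simp)).hasFDerivAt
  -- Euler's identity
  have hEuler : fderiv ℝ U q q = -α * U q := by
    have hcurve : HasDerivAt (fun c : ℝ => c • q) q 1 := by
      simpa using (hasDerivAt_id (1:ℝ)).smul_const q
    have h1 : HasDerivAt (fun c : ℝ => U (c • q)) (fderiv ℝ U q q) 1 := by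
      have hF1 : HasFDerivAt U (fderiv ℝ U q) ((1:ℝ) • q) := by rw [one_smul]; exact hF
      have := hF1.comp_hasDerivAt 1 hcurve
      exact this
    have h2 : HasDerivAt (fun c : ℝ => c ^ (-α) * U q) (-α * U q) 1 := by
      have := (Real.hasDerivAt_rpow_const (p := -α) (x := 1) (Or.inl one_ne_zero)).mul_const (U q)
      simpa using this
    have heq : (fun c : ℝ => c ^ (-α) * U q) =ᶠ[nhds 1] (fun c : ℝ => U (c • q)) := by
      filter_upwards [isOpen_Ioi.mem_nhds (show (0:ℝ) < 1 by norm_num)] with c hcpos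
      exact (hhom c hcpos q hq).symm
    exact h1.unique (h2.congr_of_eventuallyEq heq.symm)
  -- translation invariance of the differential
  have htrans : ∀ a : Body 3, fderiv ℝ U q (fun _ => a) = 0 := by
    intro a
    set A : Conf 3 n := fun _ => a with hA
    have hcurve : HasDerivAt (fun t : ℝ => q + t • A) A 0 := by
      simpa using ((hasDerivAt_id (0:ℝ)).smul_const A).const_add q
    have h1 : HasDerivAt (fun t : ℝ => U (q + t • A)) (fderiv ℝ U q A) 0 := by
      have hg0 : q + (0:ℝ) • A = q := by simp
      have hF0 : HasFDerivAt U (fderiv ℝ U q) (q + (0:ℝ) • A) := by rw [hg0]; exact hF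
      have := hF0.comp_hasDerivAt 0 hcurve
      exact this
    have h2 : (fun t : ℝ => U (q + t • A)) = fun _ => U q := by
      funext t
      exact htr (t • a) q
    rw [h2] at h1
    exact h1.unique (hasDerivAt_const (0:ℝ) (U q))
  have hGq : mInner m G q = -α * U q := by rw [← hG]; exact hEuler
  constructor
  · rintro ⟨w, hw, hGeq⟩
    have hw2 : 0 < w ^ 2 := by positivity
    constructor
    · intro v _ hPv
      rw [hG v, hGeq, mInner_smul_left', hPv, mul_zero]
    · have h1 : mInner m G q = -(w ^ 2) * mInner m (matAct P q) q := by
        rw [hGeq, mInner_smul_left']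
      rw [hGq] at h1
      nlinarith [mul_pos hw2 hc]
  · rintro ⟨hcrit, hUpos⟩
    set Pq : Conf 3 n := matAct P q with hPq
    -- G has zero total (mass-weighted) sum
    have hGY : ∑ j, m j • G j = 0 := by
      set s : Body 3 := ∑ j, m j • G j with hs
      have hsa : dotp s s = 0 := by
        rw [← mInner_const', ← hG]; exact htrans s
      have := dotp_self_eq_zero' s hsa
      simpa [hs] using this
    have hPqPq : mInner m Pq Pq = mInner m Pq q := by
      have h1 : matAct P Pq = Pq := by rw [hPq, matAct_matAct', hPidem]
      have h2 := mInner_matAct_symm' m P hPsym Pq q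
      rw [h1] at h2
      rw [← h2, hPq]
    set lam : ℝ := mInner m G Pq / mInner m Pq q with hlam
    set v : Conf 3 n := G - lam • Pq with hv
    have hvY : ∑ j, m j • v j = 0 := by
      have h1 : ∑ j, m j • v j = (∑ j, m j • G j) - lam • (∑ j, m j • Pq j) := by
        rw [hv, Finset.smul_sum]
        rw [← Finset.sum_sub_distrib]
        refine Finset.sum_congr rfl fun j _ => ?_
        rw [Pi.sub_apply, smul_sub, Pi.smul_apply, smul_comm]
      rw [h1, hGY, sum_smul_matAct' m P q hqY, smul_zero, sub_zero]
    have hPv : mInner m Pq v = 0 := by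
      rw [mInner_comm', hv, mInner_sub_left', mInner_smul_left', hPqPq, hlam,
        div_mul_cancel₀ _ hc.ne', sub_self]
    have hGv : mInner m G v = 0 := by
      rw [← hG]; exact hcrit v hvY hPv
    have hvv : mInner m v v = 0 := by
      have : mInner m v v = mInner m G v - lam * mInner m Pq v := by
        rw [hv, mInner_sub_left', mInner_smul_left']
      rw [this, hGv, hPv, mul_zero, sub_zero]
    have hv0 : v = 0 := mInner_self_eq_zero' m hm v hvv
    have hGlam : G = lam • Pq := by
      have := sub_eq_zero.mp (by rw [← hv]; exact hv0)
      exact this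
    have hlamc : lam * mInner m Pq q = -α * U q := by
      have : mInner m G q = lam * mInner m Pq q := by
        rw [hGlam, mInner_smul_left']
      rw [← this, hGq]
    have hlam_neg : lam < 0 := by
      have hαU : 0 < α * U q := mul_pos hα hUpos
      nlinarith
    refine ⟨Real.sqrt (-lam), ?_, ?_⟩
    · exact (Real.sqrt_pos.mpr (by linarith)).ne'
    · have hsq : Real.sqrt (-lam) ^ 2 = -lam := Real.sq_sqrt (by linarith)
      rw [hGlam, hsq]
      rw [neg_neg]
end
end

section
/- (Palais symmetric criticality, finite-dimensional compact group case) Let K be a compact Lie group acting smoothly on a finite-dimensional Riemannian manifold M by isometries, and f : M → ℝ a smooth K-invariant function. If p ∈ M^K = {x : gx = x for all g ∈ K} is a critical point of the restriction f|_{M^K} (where M^K is a smooth submanifold), then p is a critical point of f. -/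
noncomputable section

open RealInnerProductSpace

/-- Palais' principle of symmetric criticality, finite-dimensional case:
let `K` be a compact topological group acting continuously by (linear) isometries on a
finite-dimensional real inner product space `V`, and let `f : V → ℝ` be a smooth
`K`-invariant function.  If `p` is a `K`-fixed point which is a critical point of the
restriction of `f` to the fixed submanifold `V^K` (a linear subspace, whose tangent space
at `p` is the set of `K`-fixed vectors), then `p` is a critical point of `f`. -/
theorem palais_symmetric_criticality
    {V : Type*} [NormedAddCommGroup V] [InnerProductSpace ℝ V] [FiniteDimensional ℝ V]
    {K : Type*} [Group K] [TopologicalSpace K] [CompactSpace K] [IsTopologicalGroup K]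
    (ρ : K →* (V ≃ₗᵢ[ℝ] V))
    (hρ : Continuous fun p : K × V => ρ p.1 p.2)
    (f : V → ℝ) (hf : ContDiff ℝ (⊤ : ℕ∞) f)
    (hinv : ∀ (g : K) (x : V), f (ρ g x) = f x)
    (p : V) (hp : ∀ g : K, ρ g p = p)
    (hcrit : ∀ v : V, (∀ g : K, ρ g v = v) → fderiv ℝ f p v = 0) :
    fderiv ℝ f p = 0 := by
  have hfd : Differentiable ℝ f := hf.differentiable (by simp)
  set D := fderiv ℝ f p with hD
  -- Step 1: D is K-invariant, i.e. D (ρ g v) = D v.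
  have key : ∀ (g : K) (v : V), D ((ρ g) v) = D v := by
    intro g v
    have hcomp : (fun x => f ((ρ g) x)) = f := funext fun x => hinv g x
    have h1 : HasFDerivAt (fun x => f ((ρ g) x))
        ((fderiv ℝ f ((ρ g) p)).comp ((ρ g).toContinuousLinearEquiv : V →L[ℝ] V)) p :=
      (hfd ((ρ g) p)).hasFDerivAt.comp p ((ρ g).toContinuousLinearEquiv.hasFDerivAt)
    rw [hp g, hcomp] at h1
    have h2 : HasFDerivAt f D p := (hfd p).hasFDerivAt
    have heq := h2.unique h1
    calc D ((ρ g) v)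
        = (D.comp ((ρ g).toContinuousLinearEquiv : V →L[ℝ] V)) v := rfl
      _ = D v := by rw [← heq]
  -- Step 2: the gradient w (Riesz representative of D)
  set w := (InnerProductSpace.toDual ℝ V).symm D with hw
  have hwv : ∀ v, ⟪w, v⟫ = D v := fun v => InnerProductSpace.toDual_symm_apply
  -- Step 3: w is a fixed vector.
  have hwfix : ∀ g : K, (ρ g) w = w := by
    intro g
    apply ext_inner_right ℝ
    intro v
    have h3 : ⟪(ρ g) w, v⟫ = ⟪w, (ρ g).symm v⟫ := by
      conv_lhs => rw [← (ρ g).apply_symm_apply v]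
      exact (ρ g).inner_map_map w ((ρ g).symm v)
    have h4 : (ρ g).symm v = (ρ g⁻¹) v := by
      rw [map_inv ρ g]; rfl
    rw [h3, h4, hwv, hwv, key]
  -- Step 4: conclude w = 0, hence D = 0.
  have hDw : D w = 0 := hcrit w hwfix
  have hw0 : w = 0 := by
    have : ⟪w, w⟫ = 0 := by rw [hwv]; exact hDw
    exact inner_self_eq_zero.mp this
  ext v
  rw [← hwv, hw0]
  simp
end
end

section
/- The Newtonian-type potential U(q) = Σ_{i<j} m_i m_j ‖q_i − q_j‖^{−α} (m_j > 0, α > 0) satisfies: for every orthogonal projection p : ℝ^d → ℝ^d onto a plane and every q ∈ X, if j is an index maximizing ‖p(q_k)‖ over k, then p(∂U/∂q_j (q)) · p(q_j) ≤ 0. -/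
open scoped BigOperators
noncomputable section

/-- Euclidean norm on `ℝ^d`. -/
def euclNorm {d : ℕ} (v : Body d) : ℝ := Real.sqrt (dotp v v)

/-- The Newtonian-type potential `U(q) = ∑_{i<j} m_i m_j ‖q_i - q_j‖^{-α}`. -/
def newtonPot {d n : ℕ} (m : Fin n → ℝ) (α : ℝ) (q : Conf d n) : ℝ :=
  ∑ p ∈ Finset.univ.filter (fun p : Fin n × Fin n => p.1 < p.2),
    m p.1 * m p.2 * euclNorm (q p.1 - q p.2) ^ (-α)

section basic
variable {d n : ℕ}

lemma dotp_nonneg (v : Body d) : 0 ≤ dotp v v :=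
  Finset.sum_nonneg fun i _ => mul_self_nonneg _

lemma dotp_CS (x y : Body d) : dotp x y ≤ euclNorm x * euclNorm y := by
  have := Real.sum_mul_le_sqrt_mul_sqrt Finset.univ x y
  simpa [dotp, euclNorm, pow_two] using this

lemma enorm_sq (x : Body d) : euclNorm x * euclNorm x = dotp x x := by
  rw [euclNorm, Real.mul_self_sqrt (dotp_nonneg x)]

lemma dotp_sub_left (x y z : Body d) : dotp (x - y) z = dotp x z - dotp y z := by
  simp [dotp, sub_mul, Finset.sum_sub_distrib]

lemma dotp_smul_left (c : ℝ) (x y : Body d) : dotp (c • x) y = c * dotp x y := by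
  simp [dotp, Finset.mul_sum, mul_assoc]

lemma dotp_sum_left {ι : Type*} (s : Finset ι) (f : ι → Body d) (y : Body d) :
    dotp (∑ k ∈ s, f k) y = ∑ k ∈ s, dotp (f k) y := by
  simp only [dotp, Finset.sum_apply, Finset.sum_mul]
  exact Finset.sum_comm
end basic

section deriv
variable {d n : ℕ}

/-- squared separation -/
def sep (a b : Fin n) (q : Conf d n) : ℝ := ∑ i, (q a i - q b i) * (q a i - q b i)

/-- the E CLM -/
def Ecl (a b : Fin n) (i : Fin d) : Conf d n →L[ℝ] ℝ :=
  (ContinuousLinearMap.proj i).comp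
    ((ContinuousLinearMap.proj a : Conf d n →L[ℝ] Body d) - ContinuousLinearMap.proj b)

lemma Ecl_apply (a b : Fin n) (i : Fin d) (v : Conf d n) :
    Ecl a b i v = v a i - v b i := by
  simp [Ecl]

lemma hasFDerivAt_sep (a b : Fin n) (q : Conf d n) :
    HasFDerivAt (sep a b) (∑ i, ((q a i - q b i) • Ecl a b i + (q a i - q b i) • Ecl a b i)) q := by
  apply HasFDerivAt.fun_sum
  intro i _
  have key : ⇑(Ecl a b i) = fun v : Conf d n => v a i - v b i := funext (Ecl_apply a b i)
  have h := (Ecl a b i).hasFDerivAt (x := q)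
  rw [key] at h
  exact h.mul h

lemma sep_pos {q : Conf d n} (hq : q ∉ (collision : Set (Conf d n)))
    {a b : Fin n} (hab : a ≠ b) : 0 < sep a b q := by
  have hne : q a ≠ q b := fun h => hq ⟨a, b, hab, h⟩
  have : ∃ i, q a i ≠ q b i := by
    by_contra h
    push_neg at h
    exact hne (funext h)
  obtain ⟨i, hi⟩ := this
  apply Finset.sum_pos' (fun i _ => mul_self_nonneg _)
  exact ⟨i, Finset.mem_univ i, mul_self_pos.2 (sub_ne_zero.2 hi)⟩

lemma newtonPot_eq (m : Fin n → ℝ) (α : ℝ) :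
    newtonPot (d := d) m α = fun q =>
      ∑ pr ∈ Finset.univ.filter (fun pr : Fin n × Fin n => pr.1 < pr.2),
        m pr.1 * m pr.2 * (sep pr.1 pr.2 q) ^ (-α/2) := by
  funext q
  apply Finset.sum_congr rfl
  intro pr _
  congr 1
  have h0 : (0:ℝ) ≤ dotp (q pr.1 - q pr.2) (q pr.1 - q pr.2) :=
    Finset.sum_nonneg fun i _ => mul_self_nonneg _
  have hsep : sep pr.1 pr.2 q = dotp (q pr.1 - q pr.2) (q pr.1 - q pr.2) := by
    simp [sep, dotp]
  rw [hsep, euclNorm, Real.sqrt_eq_rpow, ← Real.rpow_mul h0]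
  congr 1
  ring

lemma hasFDerivAt_newtonPot (m : Fin n → ℝ) (α : ℝ) (q : Conf d n)
    (hq : q ∉ (collision : Set (Conf d n))) :
    HasFDerivAt (newtonPot (d := d) m α)
      (∑ pr ∈ Finset.univ.filter (fun pr : Fin n × Fin n => pr.1 < pr.2),
        (m pr.1 * m pr.2) • ((-α/2 * sep pr.1 pr.2 q ^ (-α/2 - 1)) •
          (∑ i, ((q pr.1 i - q pr.2 i) • Ecl pr.1 pr.2 i + (q pr.1 i - q pr.2 i) • Ecl pr.1 pr.2 i)))) q := by
  rw [newtonPot_eq]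
  apply HasFDerivAt.fun_sum
  intro pr hpr
  have hab : pr.1 ≠ pr.2 := (Finset.mem_filter.1 hpr).2.ne
  exact ((hasFDerivAt_sep pr.1 pr.2 q).rpow_const (Or.inl (sep_pos hq hab).ne')).const_mul _

end deriv

section final
variable {d n : ℕ}

lemma eval_single (a b j : Fin n) (i : Fin d) (w : Body d) :
    (∑ i', w i' * ((Pi.single j (Pi.single i (1:ℝ)) : Conf d n) a i'
        - (Pi.single j (Pi.single i 1) : Conf d n) b i'))
      = w i * ((if a = j then (1:ℝ) else 0) - (if b = j then 1 else 0)) := by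
  rcases eq_or_ne a j with h|h <;> rcases eq_or_ne b j with h2|h2 <;>
    simp [h, h2, Pi.single_apply, mul_sub, Finset.sum_sub_distrib]


/-- for the Newtonian-type potential with positive masses and `α > 0`,
for every orthogonal projection `p` of `ℝ^d` onto a plane and every noncollision
configuration `q`, if `j` maximizes `‖p(q_k)‖` over `k`, then
`p(∂U/∂q_j(q)) ⬝ p(q_j) ≤ 0`. -/
theorem newton_potential_projection_property {d n : ℕ}
    (m : Fin n → ℝ) (hm : ∀ j, 0 < m j) (α : ℝ) (hα : 0 < α)
    (p : Body d →ₗ[ℝ] Body d)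
    (hpidem : p ∘ₗ p = p)
    (hpsym : ∀ v w : Body d, dotp (p v) w = dotp v (p w))
    (hprank : Module.finrank ℝ (LinearMap.range p) = 2)
    (q : Conf d n) (hq : q ∉ (collision : Set (Conf d n)))
    (j : Fin n) (hj : ∀ k : Fin n, euclNorm (p (q k)) ≤ euclNorm (p (q j))) :
    dotp
      (p (fun i => fderiv ℝ (newtonPot m α) q (Pi.single j (Pi.single i 1))))
      (p (q j)) ≤ 0 := by
  have hF := hasFDerivAt_newtonPot m α q hq
  have hfd := hF.fderiv
  set pairs := Finset.univ.filter (fun pr : Fin n × Fin n => pr.1 < pr.2) with hpairs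
  -- coefficient
  set cc : Fin n × Fin n → ℝ := fun pr =>
    m pr.1 * m pr.2 * (-α/2 * sep pr.1 pr.2 q ^ (-α/2 - 1)) *
      (2 * ((if pr.1 = j then (1:ℝ) else 0) - (if pr.2 = j then 1 else 0))) with hcc
  have hG : (fun i => fderiv ℝ (newtonPot m α) q (Pi.single j (Pi.single i 1)))
      = ∑ pr ∈ pairs, cc pr • (q pr.1 - q pr.2) := by
    funext i
    rw [hfd]
    simp only [ContinuousLinearMap.coe_sum', Finset.sum_apply,
      ContinuousLinearMap.coe_smul', Pi.smul_apply, ContinuousLinearMap.add_apply,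
      ContinuousLinearMap.smul_apply, Ecl_apply, smul_eq_mul]
    apply Finset.sum_congr rfl
    intro pr _
    have := eval_single pr.1 pr.2 j i (fun i' => q pr.1 i' - q pr.2 i')
    simp only [Finset.sum_add_distrib] at *
    rw [this]
    simp only [hcc, Pi.smul_apply, Pi.sub_apply, smul_eq_mul]
    ring
  rw [hG, map_sum, dotp_sum_left]
  apply Finset.sum_nonpos
  intro pr hpr
  have hab : pr.1 ≠ pr.2 := (Finset.mem_filter.1 hpr).2.ne
  rw [map_smul, dotp_smul_left]
  -- basic facts
  have hneg : m pr.1 * m pr.2 * (-α/2 * sep pr.1 pr.2 q ^ (-α/2 - 1)) < 0 := by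
    have h1 : (0:ℝ) < sep pr.1 pr.2 q ^ (-α/2 - 1) := Real.rpow_pos_of_pos (sep_pos hq hab) _
    nlinarith [mul_pos (mul_pos (hm pr.1) (hm pr.2)) (mul_pos (half_pos hα) h1)]
  have hCS : ∀ k, dotp (p (q k)) (p (q j)) ≤ dotp (p (q j)) (p (q j)) := by
    intro k
    calc dotp (p (q k)) (p (q j)) ≤ euclNorm (p (q k)) * euclNorm (p (q j)) := dotp_CS _ _
    _ ≤ euclNorm (p (q j)) * euclNorm (p (q j)) := by
        apply mul_le_mul_of_nonneg_right (hj k) (Real.sqrt_nonneg _)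
    _ = dotp (p (q j)) (p (q j)) := enorm_sq _
  rcases eq_or_ne pr.1 j with h1|h1
  · have h2 : pr.2 ≠ j := fun h => hab (h1.trans h.symm)
    have hcoef : cc pr = m pr.1 * m pr.2 * (-α/2 * sep pr.1 pr.2 q ^ (-α/2 - 1)) * 2 := by
      simp [hcc, h1, h2]
    have hdp : 0 ≤ dotp (p (q pr.1 - q pr.2)) (p (q j)) := by
      rw [map_sub, dotp_sub_left, h1]
      exact sub_nonneg.2 (hCS pr.2)
    exact mul_nonpos_of_nonpos_of_nonneg (by rw [hcoef]; nlinarith) hdp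
  · rcases eq_or_ne pr.2 j with h2|h2
    · have hcoef : cc pr = m pr.1 * m pr.2 * (-α/2 * sep pr.1 pr.2 q ^ (-α/2 - 1)) * (-2) := by
        simp [hcc, h1, h2]
      have hdp : dotp (p (q pr.1 - q pr.2)) (p (q j)) ≤ 0 := by
        rw [map_sub, dotp_sub_left, h2]
        exact sub_nonpos.2 (hCS pr.1)
      exact mul_nonpos_of_nonneg_of_nonpos (by rw [hcoef]; nlinarith) hdp
    · have hcoef : cc pr = 0 := by simp [hcc, h1, h2]
      simp [hcoef]
end final
end
end
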